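/- arXiv:2012.01400 — 2 statements merged into one kernel-verified Lean document; each statement's English description precedes it below -/
import Mathlib

section
/- For every β > 10 and every a ∈ [0, 1/2], the variance of the integer-valued Gaussian with parameters (a, β) satisfies Var^{IG}(a, β) ≥ (1/16)·exp(−β(1−2a)/2). -/
/-!
Write `w n = exp (-β (n - a)² / 2)`. Keeping only the terms `n = 0, 1` of the variance sum gives
`∑ (n - μ)² w n ≥ μ² w 0 + (1 - μ)² w 1 ≥ w 1 / 2`, since `w 1 ≤ w 0` and `μ² + (1 - μ)² ≥ 1/2`.
On the other side, the weights decay geometrically away from `{0, 1}`: `w (-k) ≤ w 0 qᵏ` and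
`w (k + 1) ≤ w 1 qᵏ` with `q = exp (-β/2)`, so `Z ≤ 2 w 0 / (1 - q)`. Hence
`Var ≥ (1 - q) / 4 · w 1 / w 0`, and `w 1 / w 0 = exp (-β (1 - 2a) / 2)`.
-/

noncomputable section
open Real

/-- Normalization constant of the integer-valued Gaussian with parameters `(a, β)`. -/
def ZIG (a β : ℝ) : ℝ := ∑' n : ℤ, Real.exp (-β * ((n : ℝ) - a) ^ 2 / 2)

/-- Mean of the integer-valued Gaussian with parameters `(a, β)`. -/
def muIG (a β : ℝ) : ℝ :=
  (∑' n : ℤ, (n : ℝ) * Real.exp (-β * ((n : ℝ) - a) ^ 2 / 2)) / ZIG a β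

/-- Variance of the integer-valued Gaussian with parameters `(a, β)`. -/
def VarIG (a β : ℝ) : ℝ :=
  (∑' n : ℤ, ((n : ℝ) - muIG a β) ^ 2 * Real.exp (-β * ((n : ℝ) - a) ^ 2 / 2)) / ZIG a β

section IntegerGaussian

variable {β : ℝ}

lemma summable_abs_pow_mul_exp_neg_sq (hβ : 0 < β) (a : ℝ) (k : ℕ) :
    Summable fun n : ℤ ↦ |(n : ℝ)| ^ k * exp (-β * ((n : ℝ) - a) ^ 2 / 2) := by
  refine (summable_pow_mul_jacobiTheta₂_term_bound (β * |a| / (2 * π))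
    (T := β / (2 * π)) (by positivity) k).of_nonneg_of_le (fun n ↦ by positivity) fun n ↦ ?_
  rw [Int.cast_abs]
  gcongr
  have hcross : a * n ≤ |a| * |(n : ℝ)| := abs_mul a n ▸ le_abs_self _
  calc -β * ((n : ℝ) - a) ^ 2 / 2
      ≤ -β * n ^ 2 / 2 + β * (|a| * |(n : ℝ)|) := by nlinarith [sq_nonneg a]
    _ = -π * (β / (2 * π) * n ^ 2 - 2 * (β * |a| / (2 * π)) * |(n : ℝ)|) := by
      field_simp
      ring

lemma summable_sq_sub_mul_exp_neg_sq (hβ : 0 < β) (a μ : ℝ) :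
    Summable fun n : ℤ ↦ ((n : ℝ) - μ) ^ 2 * exp (-β * ((n : ℝ) - a) ^ 2 / 2) := by
  have hsq := (summable_abs_pow_mul_exp_neg_sq hβ a 2).mul_left 2
  have hconst := (summable_abs_pow_mul_exp_neg_sq hβ a 0).mul_left (2 * μ ^ 2)
  refine (hsq.add hconst).of_nonneg_of_le (fun n ↦ by positivity) fun n ↦ ?_
  have : ((n : ℝ) - μ) ^ 2 ≤ 2 * |(n : ℝ)| ^ 2 + 2 * μ ^ 2 := by
    rw [sq_abs]
    nlinarith [sq_nonneg ((n : ℝ) + μ)]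
  have hw := (exp_pos (-β * ((n : ℝ) - a) ^ 2 / 2)).le
  simp only [pow_zero, one_mul]
  nlinarith

lemma exp_neg_sq_add_nat_le (hβ : 0 ≤ β) {c : ℝ} (hc : 0 ≤ c) (k : ℕ) :
    exp (-β * (k + c) ^ 2 / 2) ≤ exp (-β * c ^ 2 / 2) * exp (-β / 2) ^ k := by
  rw [← exp_nat_mul, ← exp_add]
  refine exp_le_exp.2 ?_
  have hk : (k : ℝ) ≤ (k : ℝ) ^ 2 := by exact_mod_cast Nat.le_self_pow two_ne_zero k
  have hkc : 0 ≤ (k : ℝ) * c := by positivity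
  nlinarith

lemma summable_exp_neg_sq_add_nat (hβ : 0 < β) {c : ℝ} (hc : 0 ≤ c) :
    Summable fun k : ℕ ↦ exp (-β * (k + c) ^ 2 / 2) :=
  ((summable_geometric_of_lt_one (exp_pos _).le (exp_lt_one_iff.2 (by linarith))).mul_left _
    ).of_nonneg_of_le (fun _ ↦ (exp_pos _).le) (exp_neg_sq_add_nat_le hβ.le hc)

lemma tsum_exp_neg_sq_add_nat_le (hβ : 0 < β) {c : ℝ} (hc : 0 ≤ c) :
    ∑' k : ℕ, exp (-β * (k + c) ^ 2 / 2) ≤ exp (-β * c ^ 2 / 2) / (1 - exp (-β / 2)) := by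
  have hq : exp (-β / 2) < 1 := exp_lt_one_iff.2 (by linarith)
  have hgeom := summable_geometric_of_lt_one (exp_pos _).le hq
  calc ∑' k : ℕ, exp (-β * (k + c) ^ 2 / 2)
      ≤ ∑' k : ℕ, exp (-β * c ^ 2 / 2) * exp (-β / 2) ^ k :=
        (summable_exp_neg_sq_add_nat hβ hc).tsum_le_tsum (exp_neg_sq_add_nat_le hβ.le hc)
          (hgeom.mul_left _)
    _ = exp (-β * c ^ 2 / 2) / (1 - exp (-β / 2)) := by
      rw [tsum_mul_left, tsum_geometric_of_lt_one (exp_pos _).le hq, ← div_eq_mul_inv]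

lemma ZIG_pos (hβ : 0 < β) (a : ℝ) : 0 < ZIG a β := by
  have hsum := summable_abs_pow_mul_exp_neg_sq hβ a 0
  simp only [pow_zero, one_mul] at hsum
  exact hsum.tsum_pos (fun _ ↦ (exp_pos _).le) 0 (exp_pos _)

lemma ZIG_le (hβ : 0 < β) {a : ℝ} (ha₀ : 0 ≤ a) (ha₁ : a ≤ 1) :
    ZIG a β ≤ (exp (-β * a ^ 2 / 2) + exp (-β * (1 - a) ^ 2 / 2)) / (1 - exp (-β / 2)) := by
  have hright (k : ℕ) : ((k + 1 : ℤ) : ℝ) - a = k + (1 - a) := by push_cast; ring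
  have hleft (k : ℕ) : ((-(k + 1) + 1 : ℤ) : ℝ) - a = -(k + a) := by push_cast; ring
  have hsplit : ZIG a β = ∑' k : ℕ, exp (-β * (k + (1 - a)) ^ 2 / 2)
      + ∑' k : ℕ, exp (-β * (k + a) ^ 2 / 2) := by
    rw [ZIG, ← (Equiv.addRight (1 : ℤ)).tsum_eq]
    simp only [Equiv.coe_addRight]
    rw [tsum_of_nat_of_neg_add_one]
    · simp only [hright, hleft, neg_sq]
    · simpa only [hright] using summable_exp_neg_sq_add_nat hβ (sub_nonneg.2 ha₁)
    · simpa only [hleft, neg_sq] using summable_exp_neg_sq_add_nat hβ ha₀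
  rw [hsplit, add_div, add_comm (exp _ / _)]
  exact add_le_add (tsum_exp_neg_sq_add_nat_le hβ (sub_nonneg.2 ha₁))
    (tsum_exp_neg_sq_add_nat_le hβ ha₀)

lemma sq_mul_add_sq_mul_le_tsum (hβ : 0 < β) (a μ : ℝ) :
    μ ^ 2 * exp (-β * a ^ 2 / 2) + (1 - μ) ^ 2 * exp (-β * (1 - a) ^ 2 / 2)
      ≤ ∑' n : ℤ, ((n : ℝ) - μ) ^ 2 * exp (-β * ((n : ℝ) - a) ^ 2 / 2) := by
  have h := (summable_sq_sub_mul_exp_neg_sq hβ a μ).sum_le_tsum {0, 1}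
    (fun n _ ↦ by positivity)
  rw [Finset.sum_pair zero_ne_one] at h
  simpa using h

end IntegerGaussian

lemma half_le_sq_mul_add_sq_mul {x y : ℝ} (hy : 0 ≤ y) (hyx : y ≤ x) (μ : ℝ) :
    y / 2 ≤ μ ^ 2 * x + (1 - μ) ^ 2 * y := by
  nlinarith [sq_nonneg (2 * μ - 1), mul_le_mul_of_nonneg_left hyx (sq_nonneg μ)]

/-- Proposition 2.2: for `β > 10` and `a ∈ [0, 1/2]`,
`Var^{IG}(a, β) ≥ (1/16)·exp(−β(1−2a)/2)`. -/
theorem varIG_lower_bound (β : ℝ) (hβ : 10 < β) (a : ℝ) (ha : a ∈ Set.Icc (0 : ℝ) (1 / 2)) :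
    VarIG a β ≥ (1 / 16) * Real.exp (-β * (1 - 2 * a) / 2) := by
  obtain ⟨ha₀, ha₁⟩ := ha
  have hβ₀ : 0 < β := by linarith
  set ρ := exp (-β * (1 - 2 * a) / 2)
  set w₀ := exp (-β * a ^ 2 / 2)
  set w₁ := exp (-β * (1 - a) ^ 2 / 2)
  have hw₁ : w₁ = w₀ * ρ := by rw [← exp_add]; exact congrArg exp (by ring)
  have hw₁₀ : w₁ ≤ w₀ := exp_le_exp.2 (by nlinarith)
  have hq : exp (-β / 2) ≤ 1 / 2 :=
    ((exp_lt_exp.2 (by linarith)).trans exp_neg_one_lt_half).le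
  have hZ : ZIG a β ≤ 8 * w₀ := by
    refine (ZIG_le hβ₀ ha₀ (by linarith)).trans ?_
    rw [div_le_iff₀ (by linarith)]
    nlinarith [exp_pos (-β / 2), exp_pos (-β * a ^ 2 / 2)]
  have hN : w₁ / 2 ≤ ∑' n : ℤ, ((n : ℝ) - muIG a β) ^ 2 * exp (-β * ((n : ℝ) - a) ^ 2 / 2) :=
    (half_le_sq_mul_add_sq_mul (exp_pos _).le hw₁₀ _).trans (sq_mul_add_sq_mul_le_tsum hβ₀ a _)
  rw [VarIG, ge_iff_le, le_div_iff₀ (ZIG_pos hβ₀ a)]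
  calc 1 / 16 * ρ * ZIG a β ≤ 1 / 16 * ρ * (8 * w₀) := by gcongr
    _ = w₁ / 2 := by rw [hw₁]; ring
    _ ≤ _ := hN
end
end

section
/- For every β ≥ 1/3 one has M(β) ≥ 2β·exp(−(2π)²β/2). Moreover there exist constants c > 0, C > 0 and β₁ such that for all β ≥ β₁, c·β·exp(−(2π)²β/2) ≤ M(β) ≤ C·β·exp(−(2π)²β/2). -/
noncomputable section
open Real

/-- The error function `M(β) = (2π)²β · inf_{a∈[0,1/2]} Var^{IG}(a, (2π)²β)`. -/
def Merr (β : ℝ) : ℝ :=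
  (2 * π) ^ 2 * β * sInf ((fun a => VarIG a ((2 * π) ^ 2 * β)) '' Set.Icc (0 : ℝ) (1 / 2))

/-! For `a ∈ [0, 1/2]` the sites `n = 0` and `n = 1` both carry weight at least `exp (-b / 2)` and
lie at distance one, so whatever the mean is they contribute at least `exp (-b / 2) / 2` to the
second moment; as the partition function is at most `4` once `b ≥ 8`, this gives
`Var^{IG}(a, b) ≥ exp (-b / 2) / 8`. Conversely at `a = 0` the law is symmetric, hence centred,
and each nonzero site loses at least the factor `exp (-(b - b₀) / 2)` against a fixed reference
parameter `b₀`, so `Var^{IG}(0, b) = O(exp (-b / 2))`. -/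

lemma tsum_int_le_of_le_pow_natAbs {f : ℤ → ℝ} {r : ℝ} (hf : ∀ n, 0 ≤ f n)
    (hfr : ∀ n, f n ≤ r ^ n.natAbs) (hr : r < 1) : ∑' n, f n ≤ 2 / (1 - r) := by
  have hr₀ : 0 ≤ r := by simpa using (hf 1).trans (hfr 1)
  have hgeom : Summable fun n : ℕ => r ^ n := summable_geometric_of_lt_one hr₀ hr
  have hpos_le (n : ℕ) : f n ≤ r ^ n := by simpa using hfr n
  have hneg_le (n : ℕ) : f (-n) ≤ r ^ n := by simpa using hfr (-n)
  have hpos : Summable fun n : ℕ => f n := hgeom.of_nonneg_of_le (fun n => hf n) hpos_le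
  have hneg : Summable fun n : ℕ => f (-n) := hgeom.of_nonneg_of_le (fun n => hf _) hneg_le
  calc ∑' n, f n ≤ ∑' n, f n + f 0 := le_add_of_nonneg_right (hf 0)
    _ = ∑' n : ℕ, (f n + f (-n)) := (tsum_nat_add_neg (.of_nat_of_neg hpos hneg)).symm
    _ ≤ ∑' n : ℕ, 2 * r ^ n :=
        (hpos.add hneg).tsum_le_tsum (fun n => by linarith [hpos_le n, hneg_le n])
          (hgeom.mul_left 2)
    _ = 2 / (1 - r) := by rw [tsum_mul_left, tsum_geometric_of_lt_one hr₀ hr, div_eq_mul_inv]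

namespace IntegerGaussian

def igWeight (a b : ℝ) (n : ℤ) : ℝ := Real.exp (-b * ((n : ℝ) - a) ^ 2 / 2)

variable {a b : ℝ}

lemma igWeight_pos (a b : ℝ) (n : ℤ) : 0 < igWeight a b n := Real.exp_pos _

lemma igWeight_zero_neg (b : ℝ) (n : ℤ) : igWeight 0 b (-n) = igWeight 0 b n := by
  simp [igWeight]

lemma VarIG_eq (a b : ℝ) :
    VarIG a b = (∑' n : ℤ, ((n : ℝ) - muIG a b) ^ 2 * igWeight a b n) / ZIG a b := rfl

lemma VarIG_nonneg (a b : ℝ) : 0 ≤ VarIG a b :=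
  div_nonneg (tsum_nonneg fun n => mul_nonneg (sq_nonneg _) (igWeight_pos a b n).le)
    (tsum_nonneg fun n => (igWeight_pos a b n).le)

lemma summable_pow_mul_igWeight (k : ℕ) (a : ℝ) (hb : 0 < b) :
    Summable fun n : ℤ => (n : ℝ) ^ k * igWeight a b n := by
  -- `-b (n - a)² / 2 ≤ -π (T n² - 2 S |n|)` with `T = b / 2π` and `S = b |a| / 2π`
  refine (summable_pow_mul_jacobiTheta₂_term_bound (b * |a| / (2 * π)) (T := b / (2 * π))
    (by positivity) k).of_norm_bounded fun n => ?_
  rw [norm_mul, norm_pow, Real.norm_eq_abs, Real.norm_of_nonneg (igWeight_pos a b n).le,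
    Int.cast_abs, igWeight]
  gcongr
  have han : a * n ≤ |a| * |(n : ℝ)| := by rw [← abs_mul]; exact le_abs_self _
  field_simp
  nlinarith [sq_nonneg a]

lemma summable_igWeight (a : ℝ) (hb : 0 < b) : Summable (igWeight a b) := by
  simpa using summable_pow_mul_igWeight 0 a hb

lemma summable_sq_sub_mul_igWeight (a c : ℝ) (hb : 0 < b) :
    Summable fun n : ℤ => ((n : ℝ) - c) ^ 2 * igWeight a b n := by
  have h k := summable_pow_mul_igWeight k a hb
  exact (((h 2).sub ((h 1).mul_left (2 * c))).add ((h 0).mul_left (c ^ 2))).congr fun n => by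
    ring

lemma ZIG_pos (a : ℝ) (hb : 0 < b) : 0 < ZIG a b :=
  (summable_igWeight a hb).tsum_pos (fun n => (igWeight_pos a b n).le) 0 (igWeight_pos a b 0)

lemma igWeight_le_half_pow (hb : 8 ≤ b) (ha : |a| ≤ 1 / 2) (n : ℤ) :
    igWeight a b n ≤ (1 / 2) ^ n.natAbs := by
  have hexp : Real.exp (-1) ≤ 1 / 2 := by
    rw [Real.exp_neg, inv_le_comm₀ (Real.exp_pos _) (by norm_num)]
    linarith [Real.add_one_le_exp 1]
  calc igWeight a b n ≤ Real.exp (n.natAbs * (-1)) := by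
        refine Real.exp_le_exp.2 ?_
        rw [Nat.cast_natAbs, Int.cast_abs]
        rcases eq_or_ne n 0 with rfl | hn
        · simp only [Int.cast_zero, abs_zero]; nlinarith
        have h1 : 1 ≤ |(n : ℝ)| := by exact_mod_cast Int.one_le_abs hn
        have h2 : |(n : ℝ)| / 2 ≤ |(n : ℝ) - a| := by
          linarith [abs_sub_abs_le_abs_sub (n : ℝ) a]
        have h3 : |(n : ℝ)| ^ 2 / 4 ≤ ((n : ℝ) - a) ^ 2 := by
          rw [← sq_abs ((n : ℝ) - a)]; nlinarith
        nlinarith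
    _ = Real.exp (-1) ^ n.natAbs := Real.exp_nat_mul _ _
    _ ≤ (1 / 2) ^ n.natAbs := by gcongr

lemma ZIG_le_four (hb : 8 ≤ b) (ha : |a| ≤ 1 / 2) : ZIG a b ≤ 4 := by
  have h := tsum_int_le_of_le_pow_natAbs (fun n => (igWeight_pos a b n).le)
    (igWeight_le_half_pow hb ha) (by norm_num)
  norm_num at h
  exact h

lemma exp_neg_half_le_tsum_sq_sub_mul_igWeight (hb : 0 < b) (ha₀ : 0 ≤ a) (ha₁ : a ≤ 1 / 2)
    (c : ℝ) : Real.exp (-b / 2) / 2 ≤ ∑' n : ℤ, ((n : ℝ) - c) ^ 2 * igWeight a b n := by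
  have hw₁ : Real.exp (-b / 2) ≤ igWeight a b 1 := Real.exp_le_exp.2 (by
    push_cast; nlinarith [mul_nonneg hb.le (mul_nonneg ha₀ (by linarith : 0 ≤ 2 - a))])
  have hw₀ : igWeight a b 1 ≤ igWeight a b 0 := Real.exp_le_exp.2 (by push_cast; nlinarith)
  have hpair := (summable_sq_sub_mul_igWeight a c hb).sum_le_tsum {0, 1}
    (fun n _ => mul_nonneg (sq_nonneg _) (igWeight_pos a b n).le)
  rw [Finset.sum_pair zero_ne_one] at hpair
  push_cast at hpair
  -- the two sites are one apart, so `c ^ 2 + (1 - c) ^ 2 ≥ 1 / 2`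
  nlinarith [sq_nonneg (2 * c - 1), mul_le_mul_of_nonneg_left hw₀ (sq_nonneg c),
    igWeight_pos a b 1]

lemma exp_neg_half_div_eight_le_VarIG (hb : 8 ≤ b) (ha₀ : 0 ≤ a) (ha₁ : a ≤ 1 / 2) :
    Real.exp (-b / 2) / 8 ≤ VarIG a b := by
  have hb₀ : 0 < b := by linarith
  have hZ := ZIG_pos a hb₀
  calc Real.exp (-b / 2) / 8 ≤ Real.exp (-b / 2) / 2 / ZIG a b := by
        rw [div_div]
        gcongr
        linarith [ZIG_le_four hb (abs_le.2 ⟨by linarith, ha₁⟩)]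
    _ ≤ VarIG a b := by
        rw [VarIG_eq]
        gcongr
        exact exp_neg_half_le_tsum_sq_sub_mul_igWeight hb₀ ha₀ ha₁ _

lemma muIG_zero (b : ℝ) : muIG 0 b = 0 := by
  have hodd := (Equiv.neg ℤ).tsum_eq fun n : ℤ => (n : ℝ) * igWeight 0 b n
  simp only [Equiv.neg_apply, igWeight_zero_neg, Int.cast_neg, neg_mul, tsum_neg] at hodd
  change (∑' n : ℤ, (n : ℝ) * igWeight 0 b n) / ZIG 0 b = 0
  rw [show ∑' n : ℤ, (n : ℝ) * igWeight 0 b n = 0 by linarith, zero_div]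

lemma one_le_ZIG_zero (hb : 0 < b) : 1 ≤ ZIG 0 b := by
  calc 1 = igWeight 0 b 0 := by simp [igWeight]
    _ ≤ ZIG 0 b := (summable_igWeight 0 hb).le_tsum 0 fun n _ => (igWeight_pos 0 b n).le

lemma sq_mul_igWeight_zero_le {b₀ : ℝ} (hb : b₀ ≤ b) (n : ℤ) :
    (n : ℝ) ^ 2 * igWeight 0 b n ≤
      Real.exp (-(b - b₀) / 2) * ((n : ℝ) ^ 2 * igWeight 0 b₀ n) := by
  rcases eq_or_ne n 0 with rfl | hn
  · simp
  have hn2 : 1 ≤ (n : ℝ) ^ 2 := by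
    rw [← sq_abs]; exact one_le_pow₀ (by exact_mod_cast Int.one_le_abs hn)
  rw [mul_left_comm]
  gcongr
  rw [igWeight, igWeight, ← Real.exp_add]
  gcongr
  nlinarith

lemma exists_VarIG_zero_le {b₀ : ℝ} (hb₀ : 0 < b₀) :
    ∃ K > 0, ∀ b, b₀ ≤ b → VarIG 0 b ≤ K * Real.exp (-b / 2) := by
  set S := ∑' n : ℤ, (n : ℝ) ^ 2 * igWeight 0 b₀ n
  have hS : Summable fun n : ℤ => (n : ℝ) ^ 2 * igWeight 0 b₀ n :=
    summable_pow_mul_igWeight 2 0 hb₀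
  have hS_pos : 0 < S :=
    hS.tsum_pos (fun n => mul_nonneg (sq_nonneg _) (igWeight_pos 0 b₀ n).le) 1
      (by simpa using igWeight_pos 0 b₀ 1)
  refine ⟨Real.exp (b₀ / 2) * S, by positivity, fun b hb => ?_⟩
  have hb_pos : 0 < b := hb₀.trans_le hb
  rw [VarIG_eq, muIG_zero]
  simp only [sub_zero]
  calc (∑' n : ℤ, (n : ℝ) ^ 2 * igWeight 0 b n) / ZIG 0 b
      ≤ ∑' n : ℤ, (n : ℝ) ^ 2 * igWeight 0 b n :=
        div_le_self (tsum_nonneg fun n => mul_nonneg (sq_nonneg _) (igWeight_pos 0 b n).le)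
          (one_le_ZIG_zero hb_pos)
    _ ≤ ∑' n : ℤ, Real.exp (-(b - b₀) / 2) * ((n : ℝ) ^ 2 * igWeight 0 b₀ n) :=
        (summable_pow_mul_igWeight 2 0 hb_pos).tsum_le_tsum (sq_mul_igWeight_zero_le hb)
          (hS.mul_left _)
    _ = Real.exp (b₀ / 2) * S * Real.exp (-b / 2) := by
        rw [tsum_mul_left, mul_right_comm, ← Real.exp_add,
          show -(b - b₀) / 2 = b₀ / 2 + -b / 2 by ring]

end IntegerGaussian

open IntegerGaussian

lemma two_mul_exp_le_Merr {β : ℝ} (hβ : 1 / 3 ≤ β) :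
    2 * β * Real.exp (-(2 * π) ^ 2 * β / 2) ≤ Merr β := by
  have hπ : 9 ≤ π ^ 2 := by nlinarith [Real.pi_gt_three]
  have hb : 8 ≤ (2 * π) ^ 2 * β := by nlinarith
  have hinf : Real.exp (-((2 * π) ^ 2 * β) / 2) / 8 ≤
      sInf ((fun a => VarIG a ((2 * π) ^ 2 * β)) '' Set.Icc (0 : ℝ) (1 / 2)) :=
    le_csInf (Set.image_nonempty.2 (Set.nonempty_Icc.2 (by norm_num)))
      (Set.forall_mem_image.2 fun a ha => exp_neg_half_div_eight_le_VarIG hb ha.1 ha.2)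
  calc 2 * β * Real.exp (-(2 * π) ^ 2 * β / 2)
      ≤ 2 * β * Real.exp (-(2 * π) ^ 2 * β / 2) * (π ^ 2 / 4) :=
        le_mul_of_one_le_right (by positivity) (by linarith)
    _ = (2 * π) ^ 2 * β * (Real.exp (-((2 * π) ^ 2 * β) / 2) / 8) := by ring_nf
    _ ≤ Merr β := mul_le_mul_of_nonneg_left hinf (by positivity)

lemma exists_Merr_le {β₀ : ℝ} (hβ₀ : 0 < β₀) :
    ∃ C > 0, ∀ β, β₀ ≤ β → Merr β ≤ C * β * Real.exp (-(2 * π) ^ 2 * β / 2) := by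
  obtain ⟨K, hK, hVar⟩ := exists_VarIG_zero_le (b₀ := (2 * π) ^ 2 * β₀) (by positivity)
  refine ⟨(2 * π) ^ 2 * K, by positivity, fun β hβ => ?_⟩
  have hβ_pos : 0 < β := hβ₀.trans_le hβ
  have hbdd : BddBelow ((fun a => VarIG a ((2 * π) ^ 2 * β)) '' Set.Icc (0 : ℝ) (1 / 2)) :=
    ⟨0, Set.forall_mem_image.2 fun a _ => VarIG_nonneg a _⟩
  have hinf := csInf_le hbdd ⟨0, ⟨le_rfl, by norm_num⟩, rfl⟩
  calc Merr β ≤ (2 * π) ^ 2 * β * VarIG 0 ((2 * π) ^ 2 * β) :=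
        mul_le_mul_of_nonneg_left hinf (by positivity)
    _ ≤ (2 * π) ^ 2 * β * (K * Real.exp (-((2 * π) ^ 2 * β) / 2)) := by
        gcongr
        exact hVar _ (by gcongr)
    _ = (2 * π) ^ 2 * K * β * Real.exp (-(2 * π) ^ 2 * β / 2) := by ring_nf

/-- Corollary 2.3: `M(β) ≥ 2β·exp(−(2π)²β/2)` for `β ≥ 1/3`, and
`M(β) ≍ β·exp(−(2π)²β/2)` as `β → ∞`. -/
theorem Merr_asymptotics :
    (∀ β : ℝ, 1 / 3 ≤ β → Merr β ≥ 2 * β * Real.exp (-(2 * π) ^ 2 * β / 2)) ∧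
    ∃ c C β₁ : ℝ, 0 < c ∧ 0 < C ∧ ∀ β : ℝ, β₁ ≤ β →
      c * β * Real.exp (-(2 * π) ^ 2 * β / 2) ≤ Merr β ∧
      Merr β ≤ C * β * Real.exp (-(2 * π) ^ 2 * β / 2) := by
  obtain ⟨C, hC, hle⟩ := exists_Merr_le (β₀ := 1 / 3) (by norm_num)
  exact ⟨fun β hβ => two_mul_exp_le_Merr hβ,
    2, C, 1 / 3, two_pos, hC, fun β hβ => ⟨two_mul_exp_le_Merr hβ, hle β hβ⟩⟩
end
end
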